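/- There exists a constant K > 0 such that for every real number w ≥ 1 there exists an acyclic weighted digraph D in which every arc has weight at least 1 (i.e., w(u,v) ≥ 1 whenever w(u,v) > 0), with total weight w(D) = w and mac(D) ≤ w/4 + K·w^{3/4}. -/

import Mathlib

open scoped BigOperators Classical

noncomputable section

namespace PaperStmt

variable {V : Type*} [Fintype V]

/-- Total weight of a weighted digraph given by `w : V → V → ℝ`. -/
def totalWeight (w : V → V → ℝ) : ℝ := ∑ u, ∑ v, w u v

/-- Weight of the dicut `(X, Xᶜ)`. -/
def cutWeight (w : V → V → ℝ) (X : Finset V) : ℝ := ∑ x ∈ X, ∑ y ∈ Xᶜ, w x y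

/-- Maximum weight of a directed cut. -/
def mac (w : V → V → ℝ) : ℝ :=
  Finset.univ.sup' ⟨∅, Finset.mem_univ ∅⟩ (fun X : Finset V => cutWeight w X)

/-- `r(v) = w⁺(v) - w⁻(v)`. -/
def rv (w : V → V → ℝ) (v : V) : ℝ := (∑ u, w v u) - (∑ u, w u v)

/-- `r⁺(D) = ∑_{v : r(v) > 0} r(v)`. -/
def rPlus (w : V → V → ℝ) : ℝ :=
  ∑ v ∈ Finset.univ.filter (fun v => 0 < rv w v), rv w v

/-- A weighted digraph is acyclic if it has no directed cycle
(along arcs of positive weight). -/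
def Acyclic (w : V → V → ℝ) : Prop :=
  ¬ ∃ (t : ℕ) (f : ℕ → V), 1 ≤ t ∧ f t = f 0 ∧ ∀ i < t, 0 < w (f i) (f (i + 1))

lemma sum_ite_Ico {N a b : ℕ} (hb : b ≤ N) (f : ℕ → ℝ) :
    ∑ t ∈ Finset.range N, (if a ≤ t ∧ t < b then f t else 0) = ∑ t ∈ Finset.Ico a b, f t := by
  have h1 : Finset.Ico a b ⊆ Finset.range N := by
    intro t ht
    simp only [Finset.mem_Ico] at ht
    simp only [Finset.mem_range]
    omega
  rw [← Finset.sum_subset h1 (fun x _ hnx => by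
    rw [if_neg]
    intro hx
    exact hnx (Finset.mem_Ico.mpr hx))]
  exact Finset.sum_congr rfl (fun x hx => if_pos (Finset.mem_Ico.mp hx))

lemma sum_ind_le {n : ℕ} (P : ℕ → Prop) [DecidablePred P] (a b : ℕ)
    (h : ∀ m, P m → a ≤ m ∧ m < b) :
    ∑ m ∈ Finset.range n, (if P m then (1:ℝ) else 0) ≤ ((b - a : ℕ) : ℝ) := by
  rw [Finset.sum_boole]
  have hsub : (Finset.range n).filter P ⊆ Finset.Ico a b := by
    intro m hm
    simp only [Finset.mem_filter] at hm
    exact Finset.mem_Ico.mpr (h m hm.2)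
  have := Finset.card_le_card hsub
  rw [Nat.card_Ico] at this
  exact_mod_cast this

lemma sum_range_cast (m : ℕ) : ∑ k ∈ Finset.range m, (k:ℝ) = m*(m-1)/2 := by
  induction m with
  | zero => simp
  | succ p ih =>
      rw [Finset.sum_range_succ, ih]
      push_cast
      ring

/-- window indicator: is `v` in the window `[t-q+1, t]`, i.e. `v ≤ t < v+q`. -/
def gq (q t : ℕ) (v : Fin (q^2)) : ℝ := if v.1 ≤ t ∧ t < v.1 + q then 1 else 0

/-- tent weights:  arc `i → j` has weight `q - (j-i)` for `0 < j - i < q`. -/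
def bq (q : ℕ) (i j : Fin (q^2)) : ℝ := if i.1 < j.1 then ((i.1 + q - j.1 : ℕ) : ℝ) else 0

lemma gq_nonneg (q t : ℕ) (v : Fin (q^2)) : 0 ≤ gq q t v := by
  unfold gq; split_ifs <;> norm_num

lemma bq_nonneg (q : ℕ) (i j : Fin (q^2)) : 0 ≤ bq q i j := by
  unfold bq; split_ifs <;> positivity

lemma bq_diag (q : ℕ) (v : Fin (q^2)) : bq q v v = 0 := by
  unfold bq; rw [if_neg (lt_irrefl _)]

lemma bq_pos_lt {q : ℕ} {i j : Fin (q^2)} (h : 0 < bq q i j) : i.1 < j.1 := by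
  by_contra hc
  unfold bq at h
  rw [if_neg hc] at h
  exact lt_irrefl _ h

lemma bq_one_le {q : ℕ} {i j : Fin (q^2)} (h : 0 < bq q i j) : 1 ≤ bq q i j := by
  have hij := bq_pos_lt h
  unfold bq at h ⊢
  rw [if_pos hij] at h ⊢
  have : 1 ≤ i.1 + q - j.1 := by exact_mod_cast Nat.one_le_iff_ne_zero.mpr (by
    intro hz
    rw [hz] at h
    norm_num at h)
  exact_mod_cast this

/-- window decomposition of the tent weights -/
lemma bq_window (q : ℕ) (hq : 1 ≤ q) (i j : Fin (q^2)) :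
    bq q i j = ∑ t ∈ Finset.range (q^2+q-1),
      (if i.1 < j.1 then (1:ℝ) else 0) * (gq q t i * gq q t j) := by
  by_cases h : i.1 < j.1
  · have hpt : ∀ t, (if i.1 < j.1 then (1:ℝ) else 0) * (gq q t i * gq q t j)
        = (if j.1 ≤ t ∧ t < i.1 + q then (1:ℝ) else 0) := by
      intro t
      unfold gq
      rw [if_pos h]
      split_ifs <;> (try (exfalso; omega)) <;> norm_num
    rw [Finset.sum_congr rfl (fun t _ => hpt t)]
    have hb : i.1 + q ≤ q^2 + q - 1 := by
      have := i.isLt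
      omega
    rw [sum_ite_Ico hb (fun _ => (1:ℝ)), Finset.sum_const, Nat.card_Ico]
    unfold bq
    rw [if_pos h]
    simp
  · unfold bq
    rw [if_neg h]
    symm
    apply Finset.sum_eq_zero
    intro t _
    rw [if_neg h, zero_mul]

/-- each vertex is in exactly `q` windows -/
lemma lemC (q : ℕ) (hq : 1 ≤ q) (i : Fin (q^2)) :
    ∑ t ∈ Finset.range (q^2+q-1), gq q t i = (q:ℝ) := by
  unfold gq
  have hb : i.1 + q ≤ q^2 + q - 1 := by have := i.isLt; omega
  rw [sum_ite_Ico hb (fun _ => (1:ℝ)), Finset.sum_const, Nat.card_Ico]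
  have : i.1 + q - i.1 = q := by omega
  rw [this]
  simp

/-- key per-vertex bound: total over windows of (elements above i in window) is ≤ q(q-1)/2 -/
lemma lemA (q : ℕ) (hq : 1 ≤ q) (i : Fin (q^2)) :
    ∑ t ∈ Finset.range (q^2+q-1), ∑ j, (if i.1 < j.1 then (1:ℝ) else 0) * (gq q t i * gq q t j)
      ≤ (q:ℝ)*((q:ℝ)-1)/2 := by
  have hfac : ∀ t, ∑ j, (if i.1 < j.1 then (1:ℝ) else 0) * (gq q t i * gq q t j)
      = gq q t i * ∑ j, (if i.1 < j.1 then (1:ℝ) else 0) * gq q t j := by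
    intro t
    rw [Finset.mul_sum]
    exact Finset.sum_congr rfl (fun j _ => by ring)
  have hpt : ∀ t, gq q t i * (∑ j, (if i.1 < j.1 then (1:ℝ) else 0) * gq q t j)
      ≤ (if i.1 ≤ t ∧ t < i.1 + q then ((t - i.1 : ℕ):ℝ) else 0) := by
    intro t
    by_cases hc : i.1 ≤ t ∧ t < i.1 + q
    · rw [if_pos hc]
      have hg : gq q t i = 1 := if_pos hc
      rw [hg, one_mul]
      calc ∑ j, (if i.1 < j.1 then (1:ℝ) else 0) * gq q t j
          ≤ ∑ j : Fin (q^2), (if i.1 < j.1 ∧ j.1 ≤ t then (1:ℝ) else 0) := by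
            apply Finset.sum_le_sum
            intro j _
            unfold gq
            split_ifs <;> (try (exfalso; omega)) <;> norm_num
        _ = ∑ m ∈ Finset.range (q^2), (if i.1 < m ∧ m ≤ t then (1:ℝ) else 0) :=
            Fin.sum_univ_eq_sum_range (fun m => if i.1 < m ∧ m ≤ t then (1:ℝ) else 0) (q^2)
        _ ≤ (((t+1) - (i.1+1) : ℕ) : ℝ) := sum_ind_le _ (i.1+1) (t+1) (fun m hm => by omega)
        _ = ((t - i.1 : ℕ):ℝ) := by congr 1; omega
    · rw [if_neg hc]
      have hg : gq q t i = 0 := if_neg hc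
      rw [hg, zero_mul]
  calc ∑ t ∈ Finset.range (q^2+q-1), ∑ j, (if i.1 < j.1 then (1:ℝ) else 0) * (gq q t i * gq q t j)
      = ∑ t ∈ Finset.range (q^2+q-1), gq q t i * ∑ j, (if i.1 < j.1 then (1:ℝ) else 0) * gq q t j :=
        Finset.sum_congr rfl (fun t _ => hfac t)
    _ ≤ ∑ t ∈ Finset.range (q^2+q-1), (if i.1 ≤ t ∧ t < i.1 + q then ((t - i.1 : ℕ):ℝ) else 0) :=
        Finset.sum_le_sum (fun t _ => hpt t)
    _ = ∑ t ∈ Finset.Ico i.1 (i.1+q), ((t - i.1 : ℕ):ℝ) :=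
        sum_ite_Ico (by have := i.isLt; omega) _
    _ = ∑ k ∈ Finset.range q, ((k:ℕ):ℝ) := by
        rw [Finset.sum_Ico_eq_sum_range]
        have h1 : i.1 + q - i.1 = q := by omega
        rw [h1]
        exact Finset.sum_congr rfl (fun k _ => by congr 1; omega)
    _ ≤ (q:ℝ)*((q:ℝ)-1)/2 := by
        rw [show ∀ k:ℕ, ((k:ℕ):ℝ) = (k:ℝ) from fun _ => rfl] at *
        rw [sum_range_cast]

/-- pairs within X inside a window: exact identity -/
lemma lemB (q t : ℕ) (X : Finset (Fin (q^2))) :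
    ∑ i ∈ X, ∑ j ∈ X, (if i.1 < j.1 then (1:ℝ) else 0) * (gq q t i * gq q t j)
      = ((∑ i ∈ X, gq q t i)^2 - (∑ i ∈ X, gq q t i))/2 := by
  classical
  set u := ∑ i ∈ X, gq q t i with hu
  have hu2 : u^2 = ∑ i ∈ X, ∑ j ∈ X, gq q t i * gq q t j := by
    rw [sq, hu, Finset.sum_mul_sum]
  have tri : ∀ i j : Fin (q^2), gq q t i * gq q t j
      = (if i.1 < j.1 then (1:ℝ) else 0) * (gq q t i * gq q t j)
        + (if j.1 < i.1 then (1:ℝ) else 0) * (gq q t i * gq q t j)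
        + (if i = j then (1:ℝ) else 0) * (gq q t i * gq q t j) := by
    intro i j
    simp only [Fin.ext_iff]
    split_ifs <;> (try (exfalso; omega)) <;> ring
  have hsplit : u^2 = (∑ i ∈ X, ∑ j ∈ X, (if i.1 < j.1 then (1:ℝ) else 0) * (gq q t i * gq q t j))
      + (∑ i ∈ X, ∑ j ∈ X, (if j.1 < i.1 then (1:ℝ) else 0) * (gq q t i * gq q t j))
      + (∑ i ∈ X, ∑ j ∈ X, (if i = j then (1:ℝ) else 0) * (gq q t i * gq q t j)) := by
    rw [hu2, ← Finset.sum_add_distrib, ← Finset.sum_add_distrib]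
    apply Finset.sum_congr rfl
    intro i _
    rw [← Finset.sum_add_distrib, ← Finset.sum_add_distrib]
    exact Finset.sum_congr rfl (fun j _ => tri i j)
  have hswap : (∑ i ∈ X, ∑ j ∈ X, (if j.1 < i.1 then (1:ℝ) else 0) * (gq q t i * gq q t j))
      = ∑ i ∈ X, ∑ j ∈ X, (if i.1 < j.1 then (1:ℝ) else 0) * (gq q t i * gq q t j) := by
    rw [Finset.sum_comm]
    exact Finset.sum_congr rfl (fun i _ => Finset.sum_congr rfl (fun j _ => by ring))
  have hdiag : (∑ i ∈ X, ∑ j ∈ X, (if i = j then (1:ℝ) else 0) * (gq q t i * gq q t j)) = u := by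
    rw [hu]
    apply Finset.sum_congr rfl
    intro i hi
    rw [Finset.sum_eq_single i]
    · rw [if_pos rfl, one_mul]
      unfold gq
      split_ifs <;> norm_num
    · intro b _ hb
      rw [if_neg (fun e => hb (e.symm)), zero_mul]
    · intro hni
      exact absurd hi hni
  rw [hswap, hdiag] at hsplit
  linarith


lemma cutWeight_split {V : Type*} [Fintype V] (w : V → V → ℝ) (X : Finset V) :
    cutWeight w X = (∑ x ∈ X, ∑ y, w x y) - ∑ x ∈ X, ∑ y ∈ X, w x y := by
  unfold cutWeight
  rw [← Finset.sum_sub_distrib]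
  apply Finset.sum_congr rfl
  intro x _
  have := Finset.sum_compl_add_sum X (fun y => w x y)
  linarith

/-- Main bound: every dicut of the tent digraph has weight at most `q²(q²+q)/8`. -/
lemma cut_le (q : ℕ) (hq : 1 ≤ q) (X : Finset (Fin (q^2))) :
    cutWeight (bq q) X ≤ (q:ℝ)^2 * ((q:ℝ)^2 + (q:ℝ)) / 8 := by
  classical
  set N := q^2 + q - 1 with hN
  set F : ℕ → Fin (q^2) → Fin (q^2) → ℝ :=
    fun t i j => (if i.1 < j.1 then (1:ℝ) else 0) * (gq q t i * gq q t j) with hF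
  set u : ℕ → ℝ := fun t => ∑ i ∈ X, gq q t i with hu
  -- step 1: expand the cut over windows
  have h1 : cutWeight (bq q) X
      = (∑ i ∈ X, ∑ t ∈ Finset.range N, ∑ j, F t i j)
        - ∑ t ∈ Finset.range N, ∑ i ∈ X, ∑ j ∈ X, F t i j := by
    rw [cutWeight_split (bq q) X]
    have e1 : (∑ x ∈ X, ∑ y, bq q x y) = ∑ i ∈ X, ∑ t ∈ Finset.range N, ∑ j, F t i j := by
      apply Finset.sum_congr rfl
      intro i _
      calc ∑ y, bq q i y = ∑ j, ∑ t ∈ Finset.range N, F t i j :=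
            Finset.sum_congr rfl (fun j _ => bq_window q hq i j)
        _ = ∑ t ∈ Finset.range N, ∑ j, F t i j := Finset.sum_comm
    have e2 : (∑ x ∈ X, ∑ y ∈ X, bq q x y) = ∑ t ∈ Finset.range N, ∑ i ∈ X, ∑ j ∈ X, F t i j := by
      calc ∑ x ∈ X, ∑ y ∈ X, bq q x y
          = ∑ x ∈ X, ∑ y ∈ X, ∑ t ∈ Finset.range N, F t x y :=
            Finset.sum_congr rfl (fun x _ => Finset.sum_congr rfl (fun y _ => bq_window q hq x y))
        _ = ∑ x ∈ X, ∑ t ∈ Finset.range N, ∑ y ∈ X, F t x y :=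
            Finset.sum_congr rfl (fun x _ => Finset.sum_comm)
        _ = ∑ t ∈ Finset.range N, ∑ x ∈ X, ∑ y ∈ X, F t x y := Finset.sum_comm
    rw [e1, e2]
  -- step 2: bound the first term
  have h2 : (∑ i ∈ X, ∑ t ∈ Finset.range N, ∑ j, F t i j)
      ≤ (X.card : ℝ) * ((q:ℝ)*((q:ℝ)-1)/2) := by
    calc ∑ i ∈ X, ∑ t ∈ Finset.range N, ∑ j, F t i j
        ≤ ∑ _i ∈ X, (q:ℝ)*((q:ℝ)-1)/2 := Finset.sum_le_sum (fun i _ => lemA q hq i)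
      _ = (X.card : ℝ) * ((q:ℝ)*((q:ℝ)-1)/2) := by
          rw [Finset.sum_const, nsmul_eq_mul]
  -- step 3: second term is the pair-count
  have h3 : ∑ t ∈ Finset.range N, ∑ i ∈ X, ∑ j ∈ X, F t i j
      = ∑ t ∈ Finset.range N, ((u t)^2 - u t)/2 :=
    Finset.sum_congr rfl (fun t _ => lemB q t X)
  -- step 4: window sums
  have h4 : ∑ t ∈ Finset.range N, u t = (q:ℝ) * (X.card : ℝ) := by
    rw [hu]
    calc ∑ t ∈ Finset.range N, ∑ i ∈ X, gq q t i
        = ∑ i ∈ X, ∑ t ∈ Finset.range N, gq q t i := Finset.sum_comm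
      _ = ∑ _i ∈ X, (q:ℝ) := Finset.sum_congr rfl (fun i _ => lemC q hq i)
      _ = (q:ℝ) * (X.card : ℝ) := by rw [Finset.sum_const, nsmul_eq_mul, mul_comm]
  -- step 5: Cauchy-Schwarz
  have h5 : ((q:ℝ) * (X.card:ℝ))^2 ≤ ((q:ℝ)^2 + (q:ℝ)) * ∑ t ∈ Finset.range N, (u t)^2 := by
    have cs := Finset.sum_mul_sq_le_sq_mul_sq (Finset.range N) (fun _ => (1:ℝ)) u
    simp only [one_pow, one_mul, Finset.sum_const, Finset.card_range, nsmul_eq_mul, mul_one] at cs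
    rw [h4] at cs
    have hNle : (N:ℝ) ≤ (q:ℝ)^2 + (q:ℝ) := by
      rw [hN]
      have h1 : (1:ℕ) ≤ q^2 + q := by nlinarith
      push_cast [Nat.cast_sub h1]
      nlinarith
    have hsq : (0:ℝ) ≤ ∑ t ∈ Finset.range N, (u t)^2 :=
      Finset.sum_nonneg (fun t _ => sq_nonneg _)
    nlinarith
  -- combine
  have hsum2 : ∑ t ∈ Finset.range N, ((u t)^2 - u t)/2
      = (∑ t ∈ Finset.range N, (u t)^2)/2 - ((q:ℝ) * (X.card:ℝ))/2 := by
    calc ∑ t ∈ Finset.range N, ((u t)^2 - u t)/2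
        = ∑ t ∈ Finset.range N, ((u t)^2/2 - u t/2) :=
          Finset.sum_congr rfl (fun t _ => by ring)
      _ = (∑ t ∈ Finset.range N, (u t)^2/2) - ∑ t ∈ Finset.range N, u t/2 :=
          Finset.sum_sub_distrib _ _
      _ = (∑ t ∈ Finset.range N, (u t)^2)/2 - (∑ t ∈ Finset.range N, u t)/2 := by
          rw [← Finset.sum_div, ← Finset.sum_div]
      _ = (∑ t ∈ Finset.range N, (u t)^2)/2 - ((q:ℝ) * (X.card:ℝ))/2 := by rw [h4]
  set s : ℝ := (X.card : ℝ) with hs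
  have hs0 : 0 ≤ s := Nat.cast_nonneg _
  have hq0 : (1:ℝ) ≤ (q:ℝ) := by exact_mod_cast hq
  set U2 : ℝ := ∑ t ∈ Finset.range N, (u t)^2 with hU2
  have hU2nn : 0 ≤ U2 := Finset.sum_nonneg (fun t _ => sq_nonneg _)
  rw [h1, h3, hsum2]
  have hM : (0:ℝ) < (q:ℝ)^2 + (q:ℝ) := by nlinarith
  nlinarith [h2, h5, sq_nonneg ((q:ℝ) * (((q:ℝ)^2 + (q:ℝ)) - 2*s)), hM, hs0, hq0]


lemma cutWeight_smul {V : Type*} [Fintype V] (c : ℝ) (w : V → V → ℝ) (X : Finset V) :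
    cutWeight (fun a b => c * w a b) X = c * cutWeight w X := by
  unfold cutWeight
  rw [Finset.mul_sum]
  exact Finset.sum_congr rfl (fun x _ => (Finset.mul_sum _ _ _).symm)

lemma totalWeight_smul {V : Type*} [Fintype V] (c : ℝ) (w : V → V → ℝ) :
    totalWeight (fun a b => c * w a b) = c * totalWeight w := by
  unfold totalWeight
  rw [Finset.mul_sum]
  exact Finset.sum_congr rfl (fun x _ => (Finset.mul_sum _ _ _).symm)

lemma mac_le_total {V : Type*} [Fintype V] (w : V → V → ℝ) (h : ∀ u v, 0 ≤ w u v) :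
    mac w ≤ totalWeight w := by
  unfold mac
  apply Finset.sup'_le
  intro X _
  unfold cutWeight totalWeight
  calc ∑ x ∈ X, ∑ y ∈ Xᶜ, w x y
      ≤ ∑ x ∈ X, ∑ y, w x y := Finset.sum_le_sum (fun x _ =>
        Finset.sum_le_sum_of_subset_of_nonneg (Finset.subset_univ _) (fun y _ _ => h x y))
    _ ≤ ∑ x, ∑ y, w x y := Finset.sum_le_sum_of_subset_of_nonneg (Finset.subset_univ _)
        (fun x _ _ => Finset.sum_nonneg (fun y _ => h x y))

lemma acyclic_of_val_mono {n : ℕ} (w : Fin n → Fin n → ℝ)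
    (h : ∀ u v, 0 < w u v → u.1 < v.1) : Acyclic w := by
  rintro ⟨t, f, ht, hft, hstep⟩
  have key : ∀ i, i ≤ t → (f 0).1 + i ≤ (f i).1 := by
    intro i
    induction i with
    | zero => intro _; omega
    | succ m ih =>
        intro hm
        have h1 := ih (by omega)
        have h2 := h _ _ (hstep m (by omega))
        omega
  have hkey := key t le_rfl
  rw [hft] at hkey
  omega

/-- row upper bound -/
lemma row_le (q : ℕ) (hq : 1 ≤ q) (i : Fin (q^2)) :
    ∑ j, bq q i j ≤ (q:ℝ) * (q:ℝ) := by
  have hpt : ∀ j : Fin (q^2), bq q i j ≤ (q:ℝ) * (if i.1 < j.1 ∧ j.1 < i.1 + q then (1:ℝ) else 0) := by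
    intro j
    unfold bq
    by_cases h1 : i.1 < j.1
    · rw [if_pos h1]
      by_cases h2 : i.1 < j.1 ∧ j.1 < i.1 + q
      · rw [if_pos h2, mul_one]
        exact_mod_cast (by omega : i.1 + q - j.1 ≤ q)
      · rw [if_neg h2, mul_zero, show i.1 + q - j.1 = 0 from by omega]
        norm_num
    · rw [if_neg h1, if_neg (fun hc => h1 hc.1), mul_zero]
  calc ∑ j, bq q i j
      ≤ ∑ j : Fin (q^2), (q:ℝ) * (if i.1 < j.1 ∧ j.1 < i.1 + q then (1:ℝ) else 0) :=
        Finset.sum_le_sum (fun j _ => hpt j)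
    _ = (q:ℝ) * ∑ j : Fin (q^2), (if i.1 < j.1 ∧ j.1 < i.1 + q then (1:ℝ) else 0) :=
        (Finset.mul_sum _ _ _).symm
    _ = (q:ℝ) * ∑ m ∈ Finset.range (q^2), (if i.1 < m ∧ m < i.1 + q then (1:ℝ) else 0) := by
        rw [Fin.sum_univ_eq_sum_range (fun m => if i.1 < m ∧ m < i.1 + q then (1:ℝ) else 0)]
    _ ≤ (q:ℝ) * (((i.1+q) - (i.1+1) : ℕ) : ℝ) := by
        apply mul_le_mul_of_nonneg_left _ (by positivity)
        exact sum_ind_le _ (i.1+1) (i.1+q) (fun m hm => by omega)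
    _ ≤ (q:ℝ) * (q:ℝ) := by
        apply mul_le_mul_of_nonneg_left _ (by positivity)
        have : (i.1+q) - (i.1+1) ≤ q := by omega
        exact_mod_cast this

lemma total_le (q : ℕ) (hq : 1 ≤ q) : totalWeight (bq q) ≤ (q:ℝ)^4 := by
  unfold totalWeight
  calc ∑ i, ∑ j, bq q i j
      ≤ ∑ _i : Fin (q^2), (q:ℝ) * (q:ℝ) := Finset.sum_le_sum (fun i _ => row_le q hq i)
    _ = (q^2 : ℕ) * ((q:ℝ) * (q:ℝ)) := by
        rw [Finset.sum_const, Finset.card_univ, Fintype.card_fin, nsmul_eq_mul]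
    _ = (q:ℝ)^4 := by push_cast; ring

/-- row lower bound for interior rows -/
lemma row_ge (q : ℕ) (hq : 1 ≤ q) (i : Fin (q^2)) (hi : i.1 + q ≤ q^2) :
    (q:ℝ) * ((q:ℝ)-1)/2 ≤ ∑ j, bq q i j := by
  have hpt : ∀ j : Fin (q^2),
      (if i.1 < j.1 ∧ j.1 < i.1 + q then ((i.1 + q - j.1 : ℕ):ℝ) else 0) ≤ bq q i j := by
    intro j
    unfold bq
    split_ifs <;> (try (exfalso; omega)) <;> first | exact le_rfl | positivity
  have hE : ∑ j : Fin (q^2), (if i.1 < j.1 ∧ j.1 < i.1 + q then ((i.1 + q - j.1 : ℕ):ℝ) else 0)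
      = (q:ℝ) * ((q:ℝ)-1)/2 := by
    rw [Fin.sum_univ_eq_sum_range (fun m => if i.1 < m ∧ m < i.1 + q then ((i.1 + q - m : ℕ):ℝ) else 0)]
    have hcongr : ∀ m ∈ Finset.range (q^2),
        (if i.1 < m ∧ m < i.1 + q then ((i.1 + q - m : ℕ):ℝ) else 0)
        = (if i.1+1 ≤ m ∧ m < i.1 + q then ((i.1 + q - m : ℕ):ℝ) else 0) := by
      intro m _
      exact if_congr (by omega) rfl rfl
    rw [Finset.sum_congr rfl hcongr, sum_ite_Ico hi _, Finset.sum_Ico_eq_sum_range]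
    rw [show i.1 + q - (i.1 + 1) = q - 1 from by omega]
    have hcongr2 : ∀ k ∈ Finset.range (q-1),
        ((i.1 + q - (i.1 + 1 + k) : ℕ):ℝ) = ((q - 1 : ℕ):ℝ) - (k:ℝ) := by
      intro k hk
      have hk' := Finset.mem_range.mp hk
      rw [show i.1 + q - (i.1 + 1 + k) = (q - 1) - k from by omega]
      rw [Nat.cast_sub (by omega)]
    rw [Finset.sum_congr rfl hcongr2, Finset.sum_sub_distrib, Finset.sum_const,
      Finset.card_range, sum_range_cast, nsmul_eq_mul]
    rw [Nat.cast_sub hq]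
    push_cast
    ring
  rw [← hE]
  exact Finset.sum_le_sum (fun j _ => hpt j)

lemma total_ge (q : ℕ) (hq : 1 ≤ q) :
    (q:ℝ)^2 * ((q:ℝ)-1)^2/2 ≤ totalWeight (bq q) := by
  have hqq : q ≤ q^2 := Nat.le_self_pow (by norm_num) q
  have key : ∀ i : Fin (q^2),
      (if i.1 + q ≤ q^2 then (q:ℝ) * ((q:ℝ)-1)/2 else 0) ≤ ∑ j, bq q i j := by
    intro i
    split_ifs with h
    · exact row_ge q hq i h
    · exact Finset.sum_nonneg (fun j _ => bq_nonneg q i j)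
  have hcount : ∑ i : Fin (q^2), (if i.1 + q ≤ q^2 then (q:ℝ) * ((q:ℝ)-1)/2 else 0)
      = ((q^2 - q + 1 : ℕ):ℝ) * ((q:ℝ) * ((q:ℝ)-1)/2) := by
    rw [Fin.sum_univ_eq_sum_range (fun m => if m + q ≤ q^2 then (q:ℝ) * ((q:ℝ)-1)/2 else 0)]
    have hcongr : ∀ m ∈ Finset.range (q^2),
        (if m + q ≤ q^2 then (q:ℝ) * ((q:ℝ)-1)/2 else 0)
        = (if 0 ≤ m ∧ m < q^2 - q + 1 then (q:ℝ) * ((q:ℝ)-1)/2 else 0) := by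
      intro m _
      exact if_congr (by omega) rfl rfl
    rw [Finset.sum_congr rfl hcongr, sum_ite_Ico (by omega) _, Finset.sum_const, Nat.card_Ico,
      nsmul_eq_mul]
    norm_num
  have h1 : ((q^2 - q + 1 : ℕ):ℝ) * ((q:ℝ) * ((q:ℝ)-1)/2) ≤ totalWeight (bq q) := by
    rw [← hcount]
    exact Finset.sum_le_sum (fun i _ => key i)
  refine le_trans ?_ h1
  have hcast : ((q^2 - q + 1 : ℕ):ℝ) = (q:ℝ)^2 - (q:ℝ) + 1 := by
    push_cast [Nat.cast_sub hqq]
    ring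
  rw [hcast]
  have hq1 : (1:ℝ) ≤ (q:ℝ) := by exact_mod_cast hq
  nlinarith [hq1]

theorem acyclic_weighted_upper_bound :
    ∃ K : ℝ, 0 < K ∧ ∀ W : ℝ, 1 ≤ W →
      ∃ (n : ℕ) (w : Fin n → Fin n → ℝ), 0 < n ∧
        (∀ u v, 0 ≤ w u v) ∧ (∀ v, w v v = 0) ∧
        (∀ u v, 0 < w u v → 1 ≤ w u v) ∧ Acyclic w ∧
        totalWeight w = W ∧
        mac w ≤ W / 4 + K * W ^ ((3 : ℝ) / 4) := by
  refine ⟨100, by norm_num, ?_⟩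
  intro W hW
  have hW0 : (0:ℝ) < W := by linarith
  set x := W ^ ((1:ℝ)/4) with hxdef
  have hx0 : (0:ℝ) < x := Real.rpow_pos_of_pos hW0 _
  have hx4 : x^(4:ℕ) = W := by
    rw [hxdef, ← Real.rpow_natCast (W ^ ((1:ℝ)/4)) 4, ← Real.rpow_mul hW0.le]
    norm_num
  have hW34 : W ^ ((3:ℝ)/4) = x^(3:ℕ) := by
    rw [hxdef, ← Real.rpow_natCast (W ^ ((1:ℝ)/4)) 3, ← Real.rpow_mul hW0.le]
    norm_num
  by_cases hsmall : W < 4096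
  · -- single arc on 2 vertices
    set w2 : Fin 2 → Fin 2 → ℝ := fun u v => if u.1 = 0 ∧ v.1 = 1 then W else 0 with hw2
    have hTot : totalWeight w2 = W := by
      unfold totalWeight
      rw [hw2]
      norm_num [Fin.sum_univ_two]
    have hnn : ∀ u v, 0 ≤ w2 u v := by
      intro u v
      rw [hw2]
      dsimp only
      split_ifs
      exacts [hW0.le, le_rfl]
    refine ⟨2, w2, by norm_num, hnn, ?_, ?_, ?_, hTot, ?_⟩
    · intro v
      rw [hw2]
      dsimp only
      rw [if_neg (by rintro ⟨h0, h1⟩; omega)]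
    · intro u v h
      rw [hw2] at h ⊢
      dsimp only at h ⊢
      split_ifs at h ⊢ with hc
      · exact hW
      · exact absurd h (lt_irrefl 0)
    · apply acyclic_of_val_mono
      intro u v h
      rw [hw2] at h
      dsimp only at h
      split_ifs at h with hc
      · omega
      · exact absurd h (lt_irrefl 0)
    · calc mac w2 ≤ totalWeight w2 := mac_le_total w2 hnn
        _ = W := hTot
        _ ≤ W/4 + 100 * W ^ ((3:ℝ)/4) := by
            rw [hW34, ← hx4]
            have hx8 : x ≤ 8 := by
              apply le_of_pow_le_pow_left₀ (n := 4) (by norm_num) (by norm_num)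
              rw [hx4]
              norm_num
              linarith
            nlinarith [mul_nonneg (pow_nonneg hx0.le 3) (sub_nonneg.mpr hx8),
              pow_nonneg hx0.le 3]
  · push_neg at hsmall
    set q := ⌊x⌋₊ with hqdef
    have hx8 : (8:ℝ) ≤ x := by
      apply le_of_pow_le_pow_left₀ (n := 4) (by norm_num) hx0.le
      rw [hx4]
      norm_num
      linarith
    have hq8 : 8 ≤ q := Nat.le_floor (by exact_mod_cast hx8)
    have hq1 : 1 ≤ q := by omega
    have hq8r : (8:ℝ) ≤ (q:ℝ) := by exact_mod_cast hq8
    have hq0r : (0:ℝ) < (q:ℝ) := by linarith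
    have hqx : (q:ℝ) ≤ x := Nat.floor_le hx0.le
    have hxq : x ≤ (q:ℝ) + 1 := (Nat.lt_floor_add_one x).le
    set S := totalWeight (bq q) with hS
    have hS_low : (q:ℝ)^2 * ((q:ℝ)-1)^2/2 ≤ S := total_ge q hq1
    have hS_up : S ≤ (q:ℝ)^4 := total_le q hq1
    have hS0 : (0:ℝ) < S := lt_of_lt_of_le (by nlinarith) hS_low
    have hSW : S ≤ W := by
      refine le_trans hS_up ?_
      rw [← hx4]
      exact pow_le_pow_left₀ (by positivity) hqx 4
    set lam := W / S with hlam
    have hlam1 : (1:ℝ) ≤ lam := (one_le_div hS0).mpr hSW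
    have hlam0 : (0:ℝ) ≤ lam := by linarith
    refine ⟨q^2, (fun a b => lam * bq q a b), pow_pos (by omega) 2, ?_, ?_, ?_, ?_, ?_, ?_⟩
    · intro u v
      exact mul_nonneg hlam0 (bq_nonneg q u v)
    · intro v
      show lam * bq q v v = 0
      rw [bq_diag, mul_zero]
    · intro u v h
      dsimp only at h ⊢
      have hb0 : 0 ≤ bq q u v := bq_nonneg q u v
      have hbne : bq q u v ≠ 0 := by
        intro hz
        rw [hz, mul_zero] at h
        exact lt_irrefl _ h
      have hbpos : 0 < bq q u v := lt_of_le_of_ne hb0 (Ne.symm hbne)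
      have hb1 := bq_one_le hbpos
      calc (1:ℝ) = 1 * 1 := by norm_num
        _ ≤ lam * bq q u v := mul_le_mul hlam1 hb1 (by norm_num) hlam0
    · apply acyclic_of_val_mono
      intro u v h
      have h' : 0 < lam * bq q u v := h
      have hb0 := bq_nonneg q u v
      rcases eq_or_lt_of_le hb0 with he | hl
      · rw [← he, mul_zero] at h'
        exact absurd h' (lt_irrefl 0)
      · exact bq_pos_lt hl
    · show totalWeight _ = W
      rw [totalWeight_smul lam (bq q), ← hS, hlam]
      field_simp
    · unfold mac
      apply Finset.sup'_le
      intro X _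
      rw [cutWeight_smul lam (bq q) X]
      refine le_trans (mul_le_mul_of_nonneg_left (cut_le q hq1 X) hlam0) ?_
      rw [hW34, hlam, div_mul_eq_mul_div, div_le_iff₀ hS0, ← hx4]
      have e1 : x^(4:ℕ) * ((q:ℝ)^2*((q:ℝ)^2+(q:ℝ))/8)
          ≤ ((q:ℝ)+1)^4 * ((q:ℝ)^2*((q:ℝ)^2+(q:ℝ))/8) := by
        apply mul_le_mul_of_nonneg_right (pow_le_pow_left₀ hx0.le hxq 4)
        positivity
      have e3 : ((q:ℝ)+1)^4 * ((q:ℝ)^2*((q:ℝ)^2+(q:ℝ))/8)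
          ≤ ((q:ℝ)^4/4 + 100*(q:ℝ)^3) * ((q:ℝ)^2*((q:ℝ)-1)^2/2) := by
        have hA : (0:ℝ) ≤ (q:ℝ) - 8 := by linarith
        have hB : (0:ℝ) ≤ (q:ℝ)^3*((q:ℝ)-8) := mul_nonneg (by positivity) hA
        have hC : (0:ℝ) ≤ (q:ℝ)^2*((q:ℝ)-8) := mul_nonneg (by positivity) hA
        have hD : (0:ℝ) ≤ (q:ℝ)*((q:ℝ)-8) := mul_nonneg (by positivity) hA
        nlinarith [hA, hB, hC, hD, hq8r, hq0r]
      have e2 : ((q:ℝ)^4/4 + 100*(q:ℝ)^3) * ((q:ℝ)^2*((q:ℝ)-1)^2/2)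
          ≤ (x^(4:ℕ)/4 + 100*x^(3:ℕ)) * S := by
        have g4 : (q:ℝ)^4 ≤ x^4 := pow_le_pow_left₀ (by positivity) hqx 4
        have g3 : (q:ℝ)^3 ≤ x^3 := pow_le_pow_left₀ (by positivity) hqx 3
        apply mul_le_mul (by linarith) hS_low (by positivity) (by positivity)
      calc x^(4:ℕ) * ((q:ℝ)^2*((q:ℝ)^2+(q:ℝ))/8)
          ≤ (x^(4:ℕ)/4 + 100*x^(3:ℕ)) * S := by linarith

      

end PaperStmt
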